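/- arXiv:2210.10384 — 3 statements merged into one kernel-verified Lean document; each statement's English description precedes it below -/
import Mathlib

section
/- Let X be a topological space. Then for every function f: X → ℝ, the distance from f to the set of σ-fragmented real-valued functions equals half the σ-fragmentability index: d(f, σFrag(X,ℝ)) = (1/2)·σ-frag(f). -/
/-! If `f` is `ε`-fragmented on `K`, exhausting `K` transfinitely by relatively open sets on
which `f` oscillates by at most `ε` partitions `K` into pieces; replacing `f` on each piece by
the centre of an interval of length `ε` containing its values gives a function within `ε / 2`
of `f` that is locally constant on every subset of `K`. Gluing these over a disjointified
resolvable cover yields a σ-fragmented `g` with `d(f, g) ≤ ε / 2`. Conversely, moving `f` by `d`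
changes every oscillation by at most `2 d`, so `σ-frag f ≤ σ-frag g + 2 d(f, g)`. -/

open Set Filter Ordinal ENNReal

universe u v

section Defs

variable {X : Type u} {E : Type v}

/-- `f` restricted to `A` is `ε`-fragmented: every nonempty subset of `A` has a relatively
open nonempty piece on which the oscillation (diameter of the image) of `f` is at most `ε`. -/
def EpsFragOn [TopologicalSpace X] [PseudoEMetricSpace E] (f : X → E) (A : Set X)
    (ε : ℝ≥0∞) : Prop :=
  ∀ F : Set X, F ⊆ A → F.Nonempty → ∃ V : Set X, IsOpen V ∧ (V ∩ F).Nonempty ∧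
    EMetric.diam (f '' (V ∩ F)) ≤ ε

/-- The fragmentability index `frag f = inf {ε > 0 : f is ε-fragmented}` (with `inf ∅ = ∞`). -/
noncomputable def fragIdx [TopologicalSpace X] [PseudoEMetricSpace E] (f : X → E) : ℝ≥0∞ :=
  sInf {ε | 0 < ε ∧ EpsFragOn f Set.univ ε}

/-- A set `H` is resolvable: every nonempty `A ⊆ X` has a relatively open nonempty piece
entirely inside `H` or entirely inside its complement. -/
def Resolvable [TopologicalSpace X] (H : Set X) : Prop :=
  ∀ A : Set X, A.Nonempty → ∃ U : Set X, IsOpen U ∧ (U ∩ A).Nonempty ∧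
    (U ∩ A ⊆ H ∨ U ∩ A ⊆ Hᶜ)

/-- The σ-fragmentability index by resolvable sets. -/
noncomputable def sfragIdx [TopologicalSpace X] [PseudoEMetricSpace E] (f : X → E) : ℝ≥0∞ :=
  sInf {ε | 0 < ε ∧ ∃ H : ℕ → Set X, (∀ n, Resolvable (H n)) ∧ (⋃ n, H n) = Set.univ ∧
    ∀ n, EpsFragOn f (H n) ε}

/-- `g` is constant on each set of some resolvable partition of `X`, i.e. on each difference
`U (γ+1) \ U γ` of an increasing transfinite sequence of open sets from `∅` to `X`,
continuous at limit ordinals. -/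
def ConstOnResolvablePartition [TopologicalSpace X] (g : X → E) : Prop :=
  ∃ (κ : Ordinal.{u}) (U : Ordinal.{u} → Set X),
    (∀ α, IsOpen (U α)) ∧ (∀ α β : Ordinal, α ≤ β → U α ⊆ U β) ∧
    U 0 = ∅ ∧ U κ = Set.univ ∧
    (∀ γ, γ ≤ κ → Order.IsSuccLimit γ → U γ = ⋃ α < γ, U α) ∧
    (∀ γ < κ, ∀ x ∈ U (γ + 1) \ U γ, ∀ y ∈ U (γ + 1) \ U γ, g x = g y)

/-- The transfinite derivation of open sets in the definition of the oscillation rank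
`β(f, ε)`:  `U 0 = ∅`, `U (α+1) = U α ∪ {x ∉ U α : ∃ open V ∋ x, diam f (V \ U α) < ε}`,
and unions at limit ordinals. -/
noncomputable def oscSet [TopologicalSpace X] [PseudoEMetricSpace E] (f : X → E)
    (ε : ℝ≥0∞) (o : Ordinal.{u}) : Set X :=
  Ordinal.limitRecOn o ∅
    (fun _ U => U ∪ {x | x ∉ U ∧ ∃ V : Set X, IsOpen V ∧ x ∈ V ∧
      EMetric.diam (f '' (V \ U)) < ε})
    (fun γ _ ih => ⋃ (β : Ordinal) (h : β < γ), ih β h)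

/-- `f` has countable oscillation rank: `β(f) < ω₁`, i.e. for every `ε > 0` the derivation
reaches `X` at some countable ordinal. -/
def CountableOscRank [TopologicalSpace X] [PseudoEMetricSpace E] (f : X → E) : Prop :=
  ∀ ε : ℝ≥0∞, 0 < ε → ∃ α < ω₁, oscSet f ε α = Set.univ

/-- A transfinite sequence `(V α)_{α ≤ κ}` of open sets has property `*(f, ε)`. -/
def StarProp [TopologicalSpace X] [PseudoEMetricSpace E] (f : X → E) (ε : ℝ≥0∞)
    (κ : Ordinal.{u}) (V : Ordinal.{u} → Set X) : Prop :=
  (∀ α, α ≤ κ → IsOpen (V α)) ∧ (∀ α β : Ordinal, α ≤ β → β ≤ κ → V α ⊆ V β) ∧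
  V 0 = ∅ ∧ V κ = Set.univ ∧
  (∀ γ, γ ≤ κ → Order.IsSuccLimit γ → V γ = ⋃ α < γ, V α) ∧
  (∀ α < κ, ∀ x ∈ V (α + 1) \ V α, ∃ W : Set X, IsOpen W ∧ x ∈ W ∧
    EMetric.diam (f '' (W \ V α)) < ε)

/-- Uniform distance `d(f, g) = sup_x ρ(f x, g x)` (in `[0, ∞]`). -/
noncomputable def unifDist [PseudoEMetricSpace E] (f g : X → E) : ℝ≥0∞ :=
  ⨆ x, edist (f x) (g x)

/-- Distance from `f` to the family of σ-fragmented mappings. -/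
noncomputable def distToSFrag [TopologicalSpace X] [PseudoEMetricSpace E] (f : X → E) : ℝ≥0∞ :=
  ⨅ (g : {g : X → E // sfragIdx g = 0}), unifDist f g.1

end Defs

open scoped NNReal

section Resolvable

variable {X : Type u} [TopologicalSpace X]

theorem Resolvable.compl {H : Set X} (h : Resolvable H) : Resolvable Hᶜ := by
  intro A hA
  obtain ⟨U, hU, hne, hsub⟩ := h A hA
  exact ⟨U, hU, hne, by rwa [compl_compl, or_comm]⟩

theorem Resolvable.inter {H H' : Set X} (h : Resolvable H) (h' : Resolvable H') :
    Resolvable (H ∩ H') := by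
  intro A hA
  obtain ⟨U, hU, hne, hsub | hsub⟩ := h A hA
  · obtain ⟨U', hU', hne', hsub'⟩ := h' (U ∩ A) hne
    refine ⟨U' ∩ U, hU'.inter hU, by rwa [inter_assoc], ?_⟩
    rw [inter_assoc]
    exact hsub'.imp (fun h'' x hx => ⟨hsub hx.2, h'' hx⟩)
      (fun h'' x hx hmem => h'' hx hmem.2)
  · exact ⟨U, hU, hne, Or.inr fun x hx hmem => hsub hx hmem.1⟩

theorem Resolvable.diff {H H' : Set X} (h : Resolvable H) (h' : Resolvable H') :
    Resolvable (H \ H') :=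
  h.inter h'.compl

end Resolvable

section Exhaustion

variable {X : Type u}

theorem eq_of_mem_add_one_diff {U : Ordinal.{u} → Set X} (hU : Monotone U) {x : X}
    {γ γ' : Ordinal.{u}} (hx : x ∈ U (γ + 1) \ U γ) (hx' : x ∈ U (γ' + 1) \ U γ') : γ = γ' :=
  le_antisymm (le_of_not_gt fun h => hx.2 (hU (Order.add_one_le_of_lt h) hx'.1))
    (le_of_not_gt fun h => hx'.2 (hU (Order.add_one_le_of_lt h) hx.1))

/-- A strictly increasing family would inject `Ordinal.{u}` into `X`. -/
theorem exists_add_one_subset_of_monotone {U : Ordinal.{u} → Set X} (hU : Monotone U) :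
    ∃ θ, U (θ + 1) ⊆ U θ := by
  by_contra! h
  choose x hx using fun θ => not_subset.1 (h θ)
  exact not_injective_of_ordinal x fun θ θ' e => eq_of_mem_add_one_diff hU (hx θ) (e ▸ hx θ')

variable (next : Set X → Set X)

noncomputable def exhaust (o : Ordinal.{u}) : Set X :=
  Ordinal.limitRecOn o ∅ (fun _ U => U ∪ next U) (fun γ _ ih => ⋃ (β) (h : β < γ), ih β h)

theorem exhaust_zero : exhaust next 0 = ∅ :=
  Ordinal.limitRecOn_zero _ _ _

theorem exhaust_add_one (o : Ordinal.{u}) :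
    exhaust next (o + 1) = exhaust next o ∪ next (exhaust next o) :=
  Ordinal.limitRecOn_add_one _ _ _ _

theorem exhaust_of_isSuccLimit {o : Ordinal.{u}} (h : Order.IsSuccLimit o) :
    exhaust next o = ⋃ β < o, exhaust next β :=
  Ordinal.limitRecOn_limit _ _ _ _ h

theorem monotone_exhaust : Monotone (exhaust next) := by
  intro α β
  induction β using Ordinal.limitRecOn with
  | zero => intro h; rw [nonpos_iff_eq_zero.mp h]
  | add_one β ih =>
    intro h
    rcases h.eq_or_lt with rfl | hlt
    · exact subset_rfl
    · rw [exhaust_add_one]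
      exact (ih (Order.lt_add_one_iff.mp hlt)).trans subset_union_left
  | limit β hβ _ =>
    intro h
    rcases h.eq_or_lt with rfl | hlt
    · exact subset_rfl
    · rw [exhaust_of_isSuccLimit next hβ]
      exact subset_biUnion_of_mem hlt

theorem isOpen_exhaust [TopologicalSpace X] (hnext : ∀ S, IsOpen (next S)) (o : Ordinal.{u}) :
    IsOpen (exhaust next o) := by
  induction o using Ordinal.limitRecOn with
  | zero => rw [exhaust_zero]; exact isOpen_empty
  | add_one β ih => rw [exhaust_add_one]; exact ih.union (hnext _)
  | limit β hβ ih =>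
    rw [exhaust_of_isSuccLimit next hβ]
    exact isOpen_biUnion ih

theorem exists_exhaust_add_one_inter_nonempty {F : Set X} {α : Ordinal.{u}}
    (h : (exhaust next α ∩ F).Nonempty) :
    ∃ γ, (exhaust next (γ + 1) ∩ F).Nonempty ∧ Disjoint (exhaust next γ) F := by
  induction α using Ordinal.limitRecOn with
  | zero => simp [exhaust_zero] at h
  | add_one β ih =>
    by_cases hβ : (exhaust next β ∩ F).Nonempty
    · exact ih hβ
    · exact ⟨β, h, disjoint_iff_inter_eq_empty.2 (not_nonempty_iff_eq_empty.1 hβ)⟩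
  | limit β hβ ih =>
    obtain ⟨x, hxβ, hxF⟩ := h
    rw [exhaust_of_isSuccLimit next hβ, mem_iUnion₂] at hxβ
    obtain ⟨γ, hγ, hxγ⟩ := hxβ
    exact ih γ hγ ⟨x, hxγ, hxF⟩

theorem exists_subset_exhaust {K : Set X}
    (hnext : ∀ S, (K \ S).Nonempty → (next S ∩ (K \ S)).Nonempty) :
    ∃ θ, K ⊆ exhaust next θ := by
  obtain ⟨θ, hθ⟩ := exists_add_one_subset_of_monotone (monotone_exhaust next)
  refine ⟨θ, sdiff_eq_empty.1 (not_nonempty_iff_eq_empty.1 fun hne => ?_)⟩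
  obtain ⟨x, hx, -, hxθ⟩ := hnext _ hne
  exact hxθ (hθ (by rw [exhaust_add_one]; exact Or.inr hx))

end Exhaustion

section Fragmentation

variable {X : Type u} {E : Type v} [TopologicalSpace X] [PseudoEMetricSpace E]

theorem EpsFragOn.mono {f : X → E} {A B : Set X} {ε ε' : ℝ≥0∞} (h : EpsFragOn f B ε)
    (hAB : A ⊆ B) (hε : ε ≤ ε') : EpsFragOn f A ε' := fun F hF hFne =>
  let ⟨V, hV, hne, hd⟩ := h F (hF.trans hAB) hFne
  ⟨V, hV, hne, hd.trans hε⟩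

theorem EpsFragOn.congr {f g : X → E} {A : Set X} {ε : ℝ≥0∞} (h : EpsFragOn f A ε)
    (hfg : EqOn f g A) : EpsFragOn g A ε := fun F hF hFne =>
  let ⟨V, hV, hne, hd⟩ := h F hF hFne
  ⟨V, hV, hne, by rwa [← (hfg.mono (inter_subset_right.trans hF)).image_eq]⟩

/-- `p x` is the stage at which `x` is swallowed when `K` is exhausted by open sets witnessing
`ε`-fragmentation of what is left of `K`. -/
theorem EpsFragOn.exists_index {f : X → E} {K : Set X} {ε : ℝ≥0∞} (hf : EpsFragOn f K ε) :
    ∃ p : X → Ordinal.{u}, (∀ x ∈ K, ∀ y ∈ K, p x = p y → edist (f x) (f y) ≤ ε) ∧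
      ∀ F ⊆ K, F.Nonempty → ∃ V, IsOpen V ∧ (V ∩ F).Nonempty ∧
        ∀ x ∈ V ∩ F, ∀ y ∈ V ∩ F, p x = p y := by
  have hchoice : ∀ S : Set X, ∃ V, IsOpen V ∧ ((K \ S).Nonempty →
      (V ∩ (K \ S)).Nonempty ∧ Metric.ediam (f '' (V ∩ (K \ S))) ≤ ε) := by
    intro S
    by_cases hS : (K \ S).Nonempty
    · obtain ⟨V, hV, hne, hd⟩ := hf _ sdiff_subset hS
      exact ⟨V, hV, fun _ => ⟨hne, hd⟩⟩
    · exact ⟨∅, isOpen_empty, fun h => absurd h hS⟩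
  choose next hopen hnext using hchoice
  set U := exhaust next with hU
  obtain ⟨θ, hθ⟩ := exists_subset_exhaust next fun S hS => (hnext S hS).1
  have hfirst : ∀ F ⊆ K, F.Nonempty →
      ∃ γ, (U (γ + 1) ∩ F).Nonempty ∧ Disjoint (U γ) F := fun F hF ⟨x, hx⟩ =>
    exists_exhaust_add_one_inter_nonempty next ⟨x, hθ (hF hx), hx⟩
  have hstage : ∀ x, ∃ γ, x ∈ K → x ∈ U (γ + 1) \ U γ := by
    intro x
    by_cases hx : x ∈ K
    · obtain ⟨γ, ⟨y, hy, rfl⟩, hdisj⟩ := hfirst {x} (singleton_subset_iff.2 hx) ⟨x, rfl⟩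
      exact ⟨γ, fun _ => ⟨hy, disjoint_singleton_right.1 hdisj⟩⟩
    · exact ⟨0, fun h => absurd h hx⟩
  choose p hp using hstage
  have hpiece : ∀ x ∈ K, x ∈ next (U (p x)) ∩ (K \ U (p x)) := fun x hx => by
    have hx' := hp x hx
    rw [hU, exhaust_add_one] at hx'
    obtain ⟨hx1 | hx1, hx2⟩ := hx'
    · exact absurd hx1 hx2
    · exact ⟨hx1, hx, hx2⟩
  refine ⟨p, fun x hx y hy hxy => ?_, fun F hF hne => ?_⟩
  · have hy' := hpiece y hy
    rw [← hxy] at hy'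
    exact (Metric.edist_le_ediam_of_mem (mem_image_of_mem f (hpiece x hx))
      (mem_image_of_mem f hy')).trans (hnext _ ⟨x, (hpiece x hx).2⟩).2
  · obtain ⟨γ, hγ, hdisj⟩ := hfirst F hF hne
    have hpγ : ∀ x ∈ U (γ + 1) ∩ F, p x = γ := fun x hx =>
      eq_of_mem_add_one_diff (monotone_exhaust next) (hp x (hF hx.2))
        ⟨hx.1, disjoint_right.1 hdisj hx.2⟩
    exact ⟨U (γ + 1), isOpen_exhaust next hopen _, hγ, fun x hx y hy => (hpγ x hx).trans
      (hpγ y hy).symm⟩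

end Fragmentation

theorem abs_sub_csInf_add_half_le {S : Set ℝ} {e s : ℝ} (hS : ∀ a ∈ S, ∀ b ∈ S, a - b ≤ e)
    (hs : s ∈ S) : |s - (sInf S + e / 2)| ≤ e / 2 := by
  have hlow : s - e ≤ sInf S := le_csInf ⟨s, hs⟩ fun t ht => by linarith [hS s hs t ht]
  have hup : sInf S ≤ s := csInf_le ⟨s - e, fun t ht => by linarith [hS s hs t ht]⟩ hs
  rw [abs_le]
  constructor <;> linarith

theorem exists_edist_comp_le_half {X ι : Type*} (f : X → ℝ) (K : Set X) (p : X → ι)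
    {ε : ℝ≥0} (hf : ∀ x ∈ K, ∀ y ∈ K, p x = p y → edist (f x) (f y) ≤ ε) :
    ∃ h : ι → ℝ, ∀ x ∈ K, edist (f x) (h (p x)) ≤ (ε : ℝ≥0∞) / 2 := by
  refine ⟨fun i => sInf (f '' {y | y ∈ K ∧ p y = i}) + ε / 2, fun x hx => ?_⟩
  rw [← ENNReal.coe_two, ← ENNReal.coe_div two_ne_zero, edist_le_coe, ← dist_le_coe,
    NNReal.coe_div, NNReal.coe_two, Real.dist_eq]
  refine abs_sub_csInf_add_half_le ?_ ⟨x, ⟨hx, rfl⟩, rfl⟩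
  rintro _ ⟨y, ⟨hy, hyx⟩, rfl⟩ _ ⟨z, ⟨hz, hzx⟩, rfl⟩
  have := hf y hy z hz (hyx.trans hzx.symm)
  rw [edist_le_coe, ← dist_le_coe, Real.dist_eq] at this
  exact (le_abs_self _).trans this

section Approximation

variable {X : Type u} [TopologicalSpace X]

theorem EpsFragOn.exists_edist_le_half {f : X → ℝ} {K : Set X} {ε : ℝ≥0∞}
    (hf : EpsFragOn f K ε) (hε : ε ≠ ⊤) :
    ∃ g : X → ℝ, (∀ x ∈ K, edist (f x) (g x) ≤ ε / 2) ∧ EpsFragOn g K 0 := by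
  lift ε to ℝ≥0 using hε
  obtain ⟨p, hp, hpV⟩ := hf.exists_index
  obtain ⟨h, hh⟩ := exists_edist_comp_le_half f K p hp
  refine ⟨h ∘ p, hh, fun F hF hne => ?_⟩
  obtain ⟨V, hV, hVne, hconst⟩ := hpV F hF hne
  refine ⟨V, hV, hVne, Metric.ediam_le ?_⟩
  rintro _ ⟨x, hx, rfl⟩ _ ⟨y, hy, rfl⟩
  rw [Function.comp_apply, Function.comp_apply, hconst x hx y hy, edist_self]

theorem sfragIdx_eq_zero_of_cover {E : Type v} [PseudoEMetricSpace E] {g : X → E}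
    (H : ℕ → Set X) (hres : ∀ n, Resolvable (H n)) (hcov : ⋃ n, H n = Set.univ)
    (hg : ∀ n, EpsFragOn g (H n) 0) : sfragIdx g = 0 :=
  nonpos_iff_eq_zero.1 <| le_of_forall_gt_imp_ge_of_dense fun _ hδ =>
    sInf_le ⟨hδ, H, hres, hcov, fun n => (hg n).mono subset_rfl hδ.le⟩

theorem exists_sfragIdx_eq_zero_unifDist_le (f : X → ℝ) {ε : ℝ≥0∞} (hε : ε ≠ ⊤)
    (H : ℕ → Set X) (hres : ∀ n, Resolvable (H n)) (hcov : ⋃ n, H n = Set.univ)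
    (hfrag : ∀ n, EpsFragOn f (H n) ε) :
    ∃ g : X → ℝ, sfragIdx g = 0 ∧ unifDist f g ≤ ε / 2 := by
  set D := disjointed H
  have hDres : ∀ n, Resolvable (D n) := fun n =>
    disjointedRec (fun _ _ ht => ht.diff (hres _)) (hres n)
  have hDcov : ⋃ n, D n = Set.univ := iUnion_disjointed.trans hcov
  choose g hclose hg0 using fun n =>
    ((hfrag n).mono (disjointed_subset H n) le_rfl).exists_edist_le_half hε
  choose N hN using fun x => mem_iUnion.1 (hDcov.symm ▸ Set.mem_univ x : x ∈ ⋃ n, D n)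
  have hNeq : ∀ n, ∀ x ∈ D n, N x = n := fun n x hx =>
    (disjoint_disjointed H).eq (not_disjoint_iff.2 ⟨x, hN x, hx⟩)
  refine ⟨fun x => g (N x) x, sfragIdx_eq_zero_of_cover D hDres hDcov fun n => ?_,
    iSup_le fun x => hclose _ _ (hN x)⟩
  exact (hg0 n).congr fun x hx => by rw [hNeq n x hx]

end Approximation

section LowerBound

variable {X : Type u} {E : Type v} [PseudoEMetricSpace E]

theorem ediam_image_le_add_two_mul_unifDist (f g : X → E) (S : Set X) :
    Metric.ediam (f '' S) ≤ Metric.ediam (g '' S) + 2 * unifDist f g := by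
  refine Metric.ediam_le ?_
  rintro _ ⟨x, hx, rfl⟩ _ ⟨y, hy, rfl⟩
  have hxg : edist (f x) (g x) ≤ unifDist f g := le_iSup (fun z => edist (f z) (g z)) x
  have hyg : edist (g y) (f y) ≤ unifDist f g := edist_comm (f y) (g y) ▸
    le_iSup (fun z => edist (f z) (g z)) y
  calc edist (f x) (f y) ≤ edist (f x) (g x) + edist (g x) (g y) + edist (g y) (f y) :=
        edist_triangle4 _ _ _ _
    _ ≤ unifDist f g + Metric.ediam (g '' S) + unifDist f g := by
        gcongr
        exact Metric.edist_le_ediam_of_mem (mem_image_of_mem g hx) (mem_image_of_mem g hy)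
    _ = Metric.ediam (g '' S) + 2 * unifDist f g := by ring

theorem sfragIdx_le_add_two_mul_unifDist [TopologicalSpace X] (f g : X → E) :
    sfragIdx f ≤ sfragIdx g + 2 * unifDist f g := by
  rw [sfragIdx, sfragIdx, ENNReal.sInf_add]
  refine le_iInf₂ fun ε ⟨hε, H, hres, hcov, hfrag⟩ =>
    sInf_le ⟨hε.trans_le le_self_add, H, hres, hcov, fun n F hF hne => ?_⟩
  obtain ⟨V, hV, hVne, hd⟩ := hfrag n F hF hne
  exact ⟨V, hV, hVne, (ediam_image_le_add_two_mul_unifDist f g _).trans (add_le_add_left hd _)⟩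

end LowerBound

/-- for real-valued functions, `d(f, σFrag(X,ℝ)) = (1/2)·σ-frag(f)`. -/
theorem stmt_7 {X : Type*} [TopologicalSpace X] (f : X → ℝ) :
    distToSFrag f = sfragIdx f / 2 := by
  refine le_antisymm ?_ (le_iInf fun g => ?_)
  · rw [ENNReal.le_div_iff_mul_le (Or.inl two_ne_zero) (Or.inl ofNat_ne_top)]
    refine le_sInf fun ε ⟨_, H, hres, hcov, hfrag⟩ => ?_
    rcases eq_or_ne ε ⊤ with rfl | hε
    · exact le_top
    obtain ⟨g, hg, hfg⟩ := exists_sfragIdx_eq_zero_unifDist_le f hε H hres hcov hfrag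
    calc distToSFrag f * 2 ≤ ε / 2 * 2 := by gcongr; exact iInf_le_of_le ⟨g, hg⟩ hfg
      _ = ε := ENNReal.div_mul_cancel two_ne_zero ofNat_ne_top
  · have hf := sfragIdx_le_add_two_mul_unifDist f g.1
    rw [g.2, zero_add] at hf
    rwa [ENNReal.div_le_iff_le_mul (Or.inl two_ne_zero) (Or.inl ofNat_ne_top), mul_comm]
end

section
/- Let X be a topological space, (E,ρ) a metric space, and suppose h: X → E satisfies d(f,h) < α where h is σ-fragmented by resolvable sets with index < ε. Then f is (2α + ε)-σ-fragmented by the same resolvable sets; consequently σ-frag(f) ≤ 2·d(f, σFrag(X,E)). -/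
open Set Filter Ordinal ENNReal

universe u v

/-! A uniform perturbation of size `α` changes the oscillation of a map on any set by at most
`2α`, so every piece witnessing `ε`-fragmentability of `h` witnesses `(2α + ε)`-fragmentability
of `f`. Applied to σ-fragmented `g`, whose index is `0`, this bounds `σ-frag(f)` by
`2 d(f, g)` for each such `g`. -/
section UniformPerturbation

variable {X : Type*} {E : Type*} [PseudoEMetricSpace E]

lemma edist_le_unifDist (f g : X → E) (x : X) : edist (f x) (g x) ≤ unifDist f g :=
  le_iSup (fun x => edist (f x) (g x)) x

variable [TopologicalSpace X]

lemma EpsFragOn.of_unifDist_le {f h : X → E} {A : Set X} {α ε : ℝ≥0∞}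
    (hd : unifDist f h ≤ α) (hh : EpsFragOn h A ε) : EpsFragOn f A (2 * α + ε) := by
  intro F hFA hFne
  obtain ⟨V, hV, hne, hdiam⟩ := hh F hFA hFne
  refine ⟨V, hV, hne, Metric.ediam_le ?_⟩
  rintro _ ⟨x, hx, rfl⟩ _ ⟨y, hy, rfl⟩
  have hhxy : edist (h x) (h y) ≤ ε :=
    (Metric.edist_le_ediam_of_mem (mem_image_of_mem h hx) (mem_image_of_mem h hy)).trans hdiam
  calc edist (f x) (f y) ≤ edist (f x) (h x) + edist (h x) (h y) + edist (h y) (f y) :=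
        edist_triangle4 _ _ _ _
    _ ≤ α + ε + α := by
        gcongr
        · exact (edist_le_unifDist f h x).trans hd
        · exact (edist_comm (h y) (f y) ▸ edist_le_unifDist f h y).trans hd
    _ = 2 * α + ε := by ring

lemma sfragIdx_le_two_mul_unifDist_add (f g : X → E) :
    sfragIdx f ≤ 2 * unifDist f g + sfragIdx g := by
  unfold sfragIdx
  rw [ENNReal.add_sInf]
  refine le_iInf₂ fun t ⟨ht, H, hH, hcov, hfrag⟩ => sInf_le ⟨?_, H, hH, hcov, fun n => ?_⟩
  · exact ht.trans_le le_add_self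
  · exact (hfrag n).of_unifDist_le le_rfl

lemma sfragIdx_le_two_mul_distToSFrag (f : X → E) : sfragIdx f ≤ 2 * distToSFrag f := by
  rw [distToSFrag, ENNReal.mul_iInf_of_ne two_ne_zero ofNat_ne_top]
  refine le_iInf fun g => ?_
  simpa [g.2] using sfragIdx_le_two_mul_unifDist_add f g.1

end UniformPerturbation

theorem stmt_8_general {X E : Type*} [TopologicalSpace X] [MetricSpace E]
    (f h : X → E) (α ε : ℝ≥0∞) (hd : unifDist f h < α)
    (H : ℕ → Set X)
    (hfrag : ∀ n, EpsFragOn h (H n) ε) :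
    (∀ n, EpsFragOn f (H n) (2 * α + ε)) ∧ sfragIdx f ≤ 2 * distToSFrag f :=
  ⟨fun n => (hfrag n).of_unifDist_le hd.le, sfragIdx_le_two_mul_distToSFrag f⟩

/-- if `d(f,h) < α` and `h` is `ε`-fragmented on each set of a countable
resolvable cover, then `f` is `(2α+ε)`-fragmented on the same sets; consequently
`σ-frag(f) ≤ 2 d(f, σFrag(X,E))`. -/
theorem stmt_8 {X E : Type*} [TopologicalSpace X] [MetricSpace E]
    (f h : X → E) (α ε : ℝ≥0∞) (hd : unifDist f h < α)
    (H : ℕ → Set X) (hH : ∀ n, Resolvable (H n)) (hcov : (⋃ n, H n) = Set.univ)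
    (hfrag : ∀ n, EpsFragOn h (H n) ε) :
    (∀ n, EpsFragOn f (H n) (2 * α + ε)) ∧ sfragIdx f ≤ 2 * distToSFrag f :=
  stmt_8_general f h α ε hd H hfrag
end

section
/- Let X be a topological space, (E,ρ) and (F,σ) metric spaces, and h: E → F uniformly continuous. Then for every f: X → E, the oscillation rank satisfies β(h ∘ f) ≤ β(f). -/
open Set Filter Ordinal ENNReal

universe u v

/-! A uniformly continuous `h` turns sets of small diameter into sets of small diameter, so every
point removed at stage `α` of the `δ`-derivation of `f` is removed at stage `α` of the
`ε`-derivation of `h ∘ f`, by transfinite induction on `α`. -/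

section OscSet

variable {X E : Type*} [TopologicalSpace X] [PseudoEMetricSpace E]

theorem oscSet_zero (f : X → E) (ε : ℝ≥0∞) : oscSet f ε 0 = ∅ := by
  simp [oscSet]

theorem oscSet_add_one (f : X → E) (ε : ℝ≥0∞) (o : Ordinal) :
    oscSet f ε (o + 1) = oscSet f ε o ∪ {x | x ∉ oscSet f ε o ∧ ∃ V : Set X,
      IsOpen V ∧ x ∈ V ∧ Metric.ediam (f '' (V \ oscSet f ε o)) < ε} := by
  rw [oscSet, Ordinal.limitRecOn_add_one]
  rfl

theorem oscSet_limit (f : X → E) (ε : ℝ≥0∞) {o : Ordinal} (ho : Order.IsSuccLimit o) :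
    oscSet f ε o = ⋃ β < o, oscSet f ε β := by
  simp [oscSet, Ordinal.limitRecOn_limit _ _ _ _ ho]

theorem oscSet_subset_oscSet_of_ediam_lt {F : Type*} [PseudoEMetricSpace F] {f : X → E}
    {g : X → F} {δ ε : ℝ≥0∞}
    (hfg : ∀ s : Set X, Metric.ediam (f '' s) < δ → Metric.ediam (g '' s) < ε) (o : Ordinal) :
    oscSet f δ o ⊆ oscSet g ε o := by
  induction o using Ordinal.limitRecOn with
  | zero => simp [oscSet_zero]
  | add_one o ih =>
    rw [oscSet_add_one, oscSet_add_one]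
    rintro x (hx | ⟨-, V, hV, hxV, hdiam⟩)
    · exact Or.inl (ih hx)
    · by_cases hx' : x ∈ oscSet g ε o
      · exact Or.inl hx'
      · have hsub : V \ oscSet g ε o ⊆ V \ oscSet f δ o := sdiff_subset_sdiff_right ih
        exact Or.inr ⟨hx', V, hV, hxV,
          hfg _ ((Metric.ediam_mono (image_mono hsub)).trans_lt hdiam)⟩
  | limit o ho ih =>
    rw [oscSet_limit _ _ ho, oscSet_limit _ _ ho]
    exact iUnion₂_mono ih

end OscSet

theorem UniformContinuous.exists_pos_ediam_image_lt {E F : Type*} [PseudoEMetricSpace E]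
    [PseudoEMetricSpace F] {h : E → F} (hh : UniformContinuous h) {ε : ℝ≥0∞} (hε : 0 < ε) :
    ∃ δ > 0, ∀ s : Set E, Metric.ediam s < δ → Metric.ediam (h '' s) < ε := by
  obtain ⟨ε', hε'pos, hε'ε⟩ := exists_between hε
  obtain ⟨δ, hδpos, hδ⟩ := EMetric.uniformContinuous_iff.mp hh ε' hε'pos
  refine ⟨δ, hδpos, fun s hs => (Metric.ediam_le ?_).trans_lt hε'ε⟩
  rintro _ ⟨a, ha, rfl⟩ _ ⟨b, hb, rfl⟩
  exact (hδ ((Metric.edist_le_ediam_of_mem ha hb).trans_lt hs)).le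

/-- composing with a uniformly continuous map does not increase the
oscillation rank: `β(h ∘ f) ≤ β(f)`. -/
theorem stmt_12 {X E F : Type*} [TopologicalSpace X] [MetricSpace E] [MetricSpace F]
    (h : E → F) (hh : UniformContinuous h) (f : X → E) (κ : Ordinal)
    (hf : ∀ ε : ℝ≥0∞, 0 < ε → ∃ α ≤ κ, oscSet f ε α = Set.univ) :
    ∀ ε : ℝ≥0∞, 0 < ε → ∃ α ≤ κ, oscSet (h ∘ f) ε α = Set.univ := by
  intro ε hε
  obtain ⟨δ, hδpos, hδ⟩ := hh.exists_pos_ediam_image_lt hε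
  obtain ⟨α, hακ, hα⟩ := hf δ hδpos
  refine ⟨α, hακ, eq_univ_of_univ_subset ?_⟩
  rw [← hα]
  exact oscSet_subset_oscSet_of_ediam_lt (fun s hs => image_comp h f s ▸ hδ _ hs) α
end
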